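/- For all integers ℓ ≥ 1 and 0 ≤ j ≤ ℓ−1 one has, in K = ℂ(q,t,Z): D̄_j^{(ℓ−1)}(Z) = K̄_j^{(ℓ)}(Z) · ( (1−q^{ℓ−j})/(1−q^ℓ) ) · ( (1−Z q^{ℓ−j})/(1−Z q^{ℓ−2j}) ) · ( (1−Z)/(1−t⁻¹Z) ). -/

import Mathlib

/-!
Rational-function identities over `K = ℂ(q,t,Z)` underlying the expansion of
`E_ℓ(X)𝟏₀` and `𝟏₀E_ℓ(X)𝟏₀` in the double affine Hecke algebra of type SL₂
(with `Z` playing the role of `Y⁻²`).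
-/

noncomputable section

/-- The field `K = ℂ(q,t,Z)` of rational functions in three indeterminates. -/
abbrev K : Type := FractionRing (MvPolynomial (Fin 3) ℂ)

/-- The indeterminate `q`. -/
def q : K := algebraMap (MvPolynomial (Fin 3) ℂ) K (MvPolynomial.X 0)

/-- The indeterminate `t`. -/
def t : K := algebraMap (MvPolynomial (Fin 3) ℂ) K (MvPolynomial.X 1)

/-- The indeterminate `Z` (playing the role of `Y⁻²`). -/
def Z : K := algebraMap (MvPolynomial (Fin 3) ℂ) K (MvPolynomial.X 2)


set_option synthInstance.maxHeartbeats 1000000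
set_option maxHeartbeats 2000000

lemma hq : q ≠ 0 := by
  simpa [q] using (map_ne_zero_iff _ (IsFractionRing.injective (MvPolynomial (Fin 3) ℂ) K)).mpr
    (MvPolynomial.X_ne_zero 0)
lemma ht : t ≠ 0 := by
  simpa [t] using (map_ne_zero_iff _ (IsFractionRing.injective (MvPolynomial (Fin 3) ℂ) K)).mpr
    (MvPolynomial.X_ne_zero 1)
lemma hZ : Z ≠ 0 := by
  simpa [Z] using (map_ne_zero_iff _ (IsFractionRing.injective (MvPolynomial (Fin 3) ℂ) K)).mpr
    (MvPolynomial.X_ne_zero 2)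

open MvPolynomial in
lemma mono_eq {a b c a' b' c' : ℕ}
    (h : q ^ a * t ^ b * Z ^ c = q ^ a' * t ^ b' * Z ^ c') :
    a = a' ∧ b = b' ∧ c = c' := by
  have inj := IsFractionRing.injective (MvPolynomial (Fin 3) ℂ) K
  have h2 : (X 0 ^ a * X 1 ^ b * X 2 ^ c : MvPolynomial (Fin 3) ℂ)
      = X 0 ^ a' * X 1 ^ b' * X 2 ^ c' := by
    apply inj
    simpa [q, t, Z, map_mul, map_pow] using h
  rw [X_pow_eq_monomial, X_pow_eq_monomial, X_pow_eq_monomial,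
      X_pow_eq_monomial, X_pow_eq_monomial, X_pow_eq_monomial,
      monomial_mul, monomial_mul, monomial_mul, monomial_mul] at h2
  simp only [one_mul] at h2
  have h3 := monomial_left_injective (one_ne_zero : (1 : ℂ) ≠ 0) h2
  refine ⟨?_, ?_, ?_⟩
  · simpa [Finsupp.single_apply] using DFunLike.congr_fun h3 0
  · simpa [Finsupp.single_apply] using DFunLike.congr_fun h3 1
  · simpa [Finsupp.single_apply] using DFunLike.congr_fun h3 2

lemma mono_ne_one (a b c : ℤ) (h : ¬ (a = 0 ∧ b = 0 ∧ c = 0)) :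
    q ^ a * t ^ b * Z ^ c ≠ 1 := by
  intro heq
  have ea : ((a.toNat : ℤ)) - ((-a).toNat : ℤ) = a := by omega
  have eb : ((b.toNat : ℤ)) - ((-b).toNat : ℤ) = b := by omega
  have ec : ((c.toNat : ℤ)) - ((-c).toNat : ℤ) = c := by omega
  rw [← ea, ← eb, ← ec] at heq
  rw [zpow_sub₀ hq, zpow_sub₀ ht, zpow_sub₀ hZ] at heq
  simp only [zpow_natCast] at heq
  have h2 : q ^ a.toNat * t ^ b.toNat * Z ^ c.toNat
      = q ^ (-a).toNat * t ^ (-b).toNat * Z ^ (-c).toNat := by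
    have hB : q ^ (-a).toNat * t ^ (-b).toNat * Z ^ (-c).toNat ≠ 0 :=
      mul_ne_zero (mul_ne_zero (pow_ne_zero _ hq) (pow_ne_zero _ ht)) (pow_ne_zero _ hZ)
    rw [div_mul_div_comm, div_mul_div_comm, div_eq_one_iff_eq hB] at heq
    exact heq
  obtain ⟨h3, h4, h5⟩ := mono_eq h2
  omega

lemma one_sub_ne (a b c : ℤ) (h : ¬ (a = 0 ∧ b = 0 ∧ c = 0)) :
    1 - q ^ a * t ^ b * Z ^ c ≠ 0 :=
  sub_ne_zero.mpr (Ne.symm (mono_ne_one a b c h))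

lemma f1 (n : ℤ) (hn : n ≠ 0) : 1 - q ^ n ≠ 0 := by
  simpa using one_sub_ne n 0 0 (by simp [hn])

lemma f2 (n : ℤ) : 1 - t * q ^ n ≠ 0 := by
  have h := one_sub_ne n 1 0 (by simp)
  simpa [mul_comm] using h

lemma f3 (n : ℤ) : 1 - Z * q ^ n ≠ 0 := by
  have h := one_sub_ne n 0 1 (by simp)
  simpa [mul_comm] using h

lemma f4 (n : ℤ) : 1 - t * Z * q ^ n ≠ 0 := by
  have h := one_sub_ne n 1 1 (by simp)
  simpa [mul_comm, mul_assoc, mul_left_comm] using h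

lemma f5 (n : ℤ) : 1 - t⁻¹ * Z * q ^ n ≠ 0 := by
  have h := one_sub_ne n (-1) 1 (by simp)
  simpa [mul_comm, mul_assoc, mul_left_comm, zpow_neg] using h

/-- The `q`-Pochhammer symbol `(a;q)_n = ∏_{i=0}^{n-1} (1 - a qⁱ)`. -/
def poch (a : K) (n : ℕ) : K := ∏ i ∈ Finset.range n, (1 - a * q ^ i)


lemma poch_succ (a : K) (n : ℕ) : poch a (n + 1) = poch a n * (1 - a * q ^ n) :=
  Finset.prod_range_succ _ n

lemma poch_shift (a : K) (n : ℕ) : poch a (n + 1) = (1 - a) * poch (a * q) n := by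
  rw [poch, Finset.prod_range_succ', poch]
  simp only [pow_zero, mul_one]
  rw [mul_comm]
  congr 1
  exact Finset.prod_congr rfl fun i _ => by ring_nf

lemma P2rel (c : K) (j : ℕ) (hc : 1 - c ≠ 0) :
    poch (c * q) j = poch c j * (1 - c * q ^ j) / (1 - c) := by
  have h1 := poch_succ c j
  have h2 := poch_shift c j
  field_simp
  linear_combination h1 - h2

lemma f2n (n : ℕ) : 1 - t * q ^ n ≠ 0 := by
  have := f2 (n : ℤ); rwa [zpow_natCast] at this

lemma f1n (n : ℕ) : 1 - q * q ^ n ≠ 0 := by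
  have := f1 ((n : ℤ) + 1) (by omega)
  rwa [zpow_add_one₀ hq, zpow_natCast, mul_comm] at this

lemma poch_q_ne (n : ℕ) : poch q n ≠ 0 := by
  rw [poch]
  exact Finset.prod_ne_zero_iff.mpr fun i _ => f1n i

lemma poch_t_ne (n : ℕ) : poch t n ≠ 0 := by
  rw [poch]
  exact Finset.prod_ne_zero_iff.mpr fun i _ => f2n i

lemma poch_Zq_ne (n : ℕ) : poch (Z * q) n ≠ 0 := by
  rw [poch]
  refine Finset.prod_ne_zero_iff.mpr fun i _ => ?_
  have hE : Z * q * q ^ i = Z * q ^ ((i : ℤ) + 1) := by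
    rw [zpow_add_one₀ hq, zpow_natCast]; ring
  rw [hE]; exact f3 _

lemma poch_Zqj_ne (j n : ℕ) : poch (Z * q ^ (-(j : ℤ))) n ≠ 0 := by
  rw [poch]
  refine Finset.prod_ne_zero_iff.mpr fun i _ => ?_
  have hE : Z * q ^ (-(j : ℤ)) * q ^ i = Z * q ^ ((i : ℤ) - (j : ℤ)) := by
    rw [mul_assoc, ← zpow_natCast q i, ← zpow_add₀ hq]
    congr 2
    ring
  rw [hE]; exact f3 _

/-- The `q,t`-binomial coefficient `[ℓ j]_{q,t}`. -/
def qtBinom (l j : ℕ) : K :=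
  (poch q l / poch t l) / ((poch q j / poch t j) * (poch q (l - j) / poch t (l - j)))

/-- The `Y`-binomial coefficient
`Bin(ℓ,j;z) = (t⁻¹z q^{−(j−1)};q)_{ℓ−j} (tz q^{ℓ−2j};q)_j / ((zq;q)_{ℓ−j} (z q^{−j};q)_j)`. -/
def Bin (l j : ℕ) (z : K) : K :=
  poch (t⁻¹ * z * q ^ (1 - (j : ℤ))) (l - j) * poch (t * z * q ^ ((l : ℤ) - 2 * j)) j
    / (poch (z * q) (l - j) * poch (z * q ^ (-(j : ℤ))) j)

/-- `D̄_j^{(ℓ)}(z) = t^{ℓ−j}·[ℓ j]_{q,t}·Bin(ℓ,j;z)·((1−tq^{ℓ−j})/(1−tq^ℓ))·((1−tzq^{ℓ−j})/(1−tzq^{ℓ−2j}))`,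
equal to `t^{(ℓ+1)/2} D_j^{(ℓ)}(Y)` of the paper under `z = Y⁻²`. -/
def Dbar (l j : ℕ) (z : K) : K :=
  t ^ ((l : ℤ) - j) * qtBinom l j * Bin l j z
    * ((1 - t * q ^ ((l : ℤ) - j)) / (1 - t * q ^ l))
    * ((1 - t * z * q ^ ((l : ℤ) - j)) / (1 - t * z * q ^ ((l : ℤ) - 2 * j)))

/-- `K̄_j^{(ℓ)}(z) = t^{ℓ−1−j}·[ℓ j]_{q,t}·Bin(ℓ,j;z)·((1−zq^{ℓ−2j})/(1−t⁻¹zq^{ℓ−2j}))·((1−t⁻¹z)/(1−z))`,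
equal to `t^{(ℓ−1)/2} K_j^{(ℓ)}(Y)` of the paper under `z = Y⁻²`. -/
def Kbar (l j : ℕ) (z : K) : K :=
  t ^ ((l : ℤ) - 1 - j) * qtBinom l j * Bin l j z
    * ((1 - z * q ^ ((l : ℤ) - 2 * j)) / (1 - t⁻¹ * z * q ^ ((l : ℤ) - 2 * j)))
    * ((1 - t⁻¹ * z) / (1 - z))

/-- **The identity `DtoK`**: for `ℓ ≥ 1` and `0 ≤ j ≤ ℓ−1`,
`D̄_j^{(ℓ−1)}(Z) = K̄_j^{(ℓ)}(Z)·((1−q^{ℓ−j})/(1−q^ℓ))·((1−Zq^{ℓ−j})/(1−Zq^{ℓ−2j}))·((1−Z)/(1−t⁻¹Z))`. -/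
theorem Dbar_to_Kbar (l j : ℕ) (hl : 1 ≤ l) (hj : j ≤ l - 1) :
    Dbar (l - 1) j Z
      = Kbar l j Z * ((1 - q ^ ((l : ℤ) - j)) / (1 - q ^ l))
          * ((1 - Z * q ^ ((l : ℤ) - j)) / (1 - Z * q ^ ((l : ℤ) - 2 * j)))
          * ((1 - Z) / (1 - t⁻¹ * Z)) := by
  obtain ⟨m, rfl⟩ : ∃ m, l = m + 1 := ⟨l - 1, by omega⟩
  obtain ⟨k, rfl⟩ : ∃ k, m = j + k := le_iff_exists_add.mp (by omega)
  simp only [Nat.add_sub_cancel]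
  unfold Dbar Kbar qtBinom Bin
  have n1 : j + k - j = k := by omega
  have n2 : j + k + 1 - j = k + 1 := by omega
  rw [n1, n2]
  have e1 : ((j + k : ℕ) : ℤ) - j = (k : ℤ) := by push_cast; ring
  have e2 : ((j + k : ℕ) : ℤ) - 2 * j = (k : ℤ) - j := by push_cast; ring
  have e3 : ((j + k + 1 : ℕ) : ℤ) - j = (k : ℤ) + 1 := by push_cast; ring
  have e4 : ((j + k + 1 : ℕ) : ℤ) - 2 * j = ((k : ℤ) - j) + 1 := by push_cast; ring
  have e5 : ((j + k + 1 : ℕ) : ℤ) - 1 - j = (k : ℤ) := by push_cast; ring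
  rw [e1, e2, e3, e4, e5]
  have hsp : q ^ ((k : ℤ) - j + 1) = q ^ ((k : ℤ) - j) * q := zpow_add_one₀ hq _
  rw [hsp]
  have hb : t * Z * (q ^ ((k : ℤ) - (j : ℤ)) * q) = t * Z * q ^ ((k : ℤ) - (j : ℤ)) * q :=
    (mul_assoc _ _ _).symm
  rw [hb]
  rw [P2rel (t * Z * q ^ ((k : ℤ) - (j : ℤ))) j (f4 _)]
  rw [poch_succ q (j + k), poch_succ t (j + k), poch_succ q k, poch_succ t k,
    poch_succ (t⁻¹ * Z * q ^ (1 - (j : ℤ))) k, poch_succ (Z * q) k]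
  have hx : q ^ (1 - (j : ℤ)) * q ^ k = q ^ ((k : ℤ) - j) * q := by
    rw [← zpow_natCast q k, ← zpow_add₀ hq, ← zpow_add_one₀ hq]
    congr 1
    ring
  have hy : q ^ ((k : ℤ) - j) * q ^ j = q ^ (k : ℤ) := by
    rw [← zpow_natCast q j, ← zpow_add₀ hq]
    congr 1
    ring
  rw [mul_assoc (t⁻¹ * Z) (q ^ (1 - (j : ℤ))) (q ^ k), hx,
      mul_assoc (t * Z) (q ^ ((k : ℤ) - (j : ℤ))) (q ^ j), hy]
  have hk1 : q ^ ((k : ℤ) + 1) = q ^ k * q := by rw [zpow_add_one₀ hq, zpow_natCast]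
  have hk0 : q ^ ((k : ℤ)) = q ^ k := zpow_natCast q k
  have htk : t ^ ((k : ℤ)) = t ^ k := zpow_natCast t k
  rw [hk1, hk0, htk]
  have A1 : poch t (j + k) ≠ 0 := poch_t_ne _
  have A2 : poch q j ≠ 0 := poch_q_ne _
  have A3 : poch t j ≠ 0 := poch_t_ne _
  have A4 : poch q k ≠ 0 := poch_q_ne _
  have A5 : poch t k ≠ 0 := poch_t_ne _
  have A6 : poch q (j + k) ≠ 0 := poch_q_ne _
  have A7 : poch (Z * q) k ≠ 0 := poch_Zq_ne _
  have A8 : poch (Z * q ^ (-(j : ℤ))) j ≠ 0 := poch_Zqj_ne _ _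
  have B1 : 1 - t * q ^ (j + k) ≠ 0 := f2n _
  have B2 : 1 - t * q ^ k ≠ 0 := f2n _
  have B3 : 1 - q * q ^ k ≠ 0 := f1n _
  have B4 : 1 - q * q ^ (j + k) ≠ 0 := f1n _
  have B5 : 1 - q ^ (j + k + 1) ≠ 0 := by
    have := f1 ((j + k + 1 : ℕ) : ℤ) (by omega)
    rwa [zpow_natCast] at this
  have B6 : 1 - Z * q * q ^ k ≠ 0 := by
    have hE : Z * q * q ^ k = Z * q ^ ((k : ℤ) + 1) := by
      rw [zpow_add_one₀ hq, zpow_natCast]; ring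
    rw [hE]; exact f3 _
  have B7 : 1 - t * Z * q ^ ((k : ℤ) - j) ≠ 0 := f4 _
  have B8 : 1 - Z * (q ^ ((k : ℤ) - j) * q) ≠ 0 := by
    have hE : (q ^ ((k : ℤ) - j) * q) = q ^ ((k : ℤ) - j + 1) := (zpow_add_one₀ hq _).symm
    rw [hE]; exact f3 _
  have B9 : 1 - t⁻¹ * Z * (q ^ ((k : ℤ) - j) * q) ≠ 0 := by
    have hE : (q ^ ((k : ℤ) - j) * q) = q ^ ((k : ℤ) - j + 1) := (zpow_add_one₀ hq _).symm
    rw [hE]; exact f5 _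
  have B10 : 1 - Z ≠ 0 := by simpa using one_sub_ne 0 0 1 (by simp)
  have B11 : 1 - t⁻¹ * Z ≠ 0 := by simpa using f5 0
  have C9 : 1 - Z * (q ^ ((k : ℤ) - j) * q) / t ≠ 0 := by
    have hE : Z * (q ^ ((k : ℤ) - j) * q) / t = t⁻¹ * Z * (q ^ ((k : ℤ) - j) * q) := by ring
    rw [hE]; exact B9
  have C11 : 1 - Z / t ≠ 0 := by
    have hE : Z / t = t⁻¹ * Z := by ring
    rw [hE]; exact B11
  have CA8 : poch (Z / q ^ j) j ≠ 0 := by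
    have hE : Z / q ^ j = Z * q ^ (-(j : ℤ)) := by
      rw [zpow_neg, zpow_natCast, div_eq_mul_inv]
    rw [hE]; exact A8
  field_simp
  rw [eq_div_iff]
  · ring
  · have C9' : 1 - Z * q ^ ((k : ℤ) - j) * q / t ≠ 0 := by rwa [mul_assoc Z]
    have B8' : 1 - Z * q ^ ((k : ℤ) - j) * q ≠ 0 := by rwa [mul_assoc Z]
    repeat' apply mul_ne_zero
    all_goals assumption


end
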